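/- Let L be a solvable Leibniz A-algebra. Then Z(L) ∩ L² = 0, where L² = [L,L] and Z(L) is the centre of L. -/

import Mathlib

/-- A (right) Leibniz algebra structure on an `F`-vector space `L`:
a bilinear bracket satisfying `[x,[y,z]] = [[x,y],z] - [[x,z],y]`. -/
structure LeibnizAlg (F : Type*) (L : Type*) [Field F] [AddCommGroup L] [Module F L] where
  bracket : L →ₗ[F] L →ₗ[F] L
  leibniz : ∀ x y z : L,
    bracket x (bracket y z) = bracket (bracket x y) z - bracket (bracket x z) y

namespace LeibnizAlg

variable {F : Type*} {L : Type*} [Field F] [AddCommGroup L] [Module F L]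

/-- The product `[M, N]` of two subspaces: the span of all brackets `[m, n]`. -/
def prod (A : LeibnizAlg F L) (M N : Submodule F L) : Submodule F L :=
  Submodule.span F {z : L | ∃ m ∈ M, ∃ n ∈ N, z = A.bracket m n}

/-- A subalgebra: a subspace closed under the product. -/
def IsSubalgebra (A : LeibnizAlg F L) (S : Submodule F L) : Prop :=
  A.prod S S ≤ S

/-- A (two-sided) ideal: `[I, L] ⊆ I` and `[L, I] ⊆ I`. -/
def IsIdeal (A : LeibnizAlg F L) (I : Submodule F L) : Prop :=
  A.prod I ⊤ ≤ I ∧ A.prod ⊤ I ≤ I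

/-- Lower central series of a subspace `U`: `lcs U 0 = U = U¹`,
`lcs U k = U^(k+1)`, i.e. `lcs U (k+1) = [lcs U k, U]`. -/
def lcs (A : LeibnizAlg F L) (U : Submodule F L) : ℕ → Submodule F L
  | 0 => U
  | k + 1 => A.prod (lcs A U k) U

/-- `U` is nilpotent: `U^(n+1) = 0` for some `n`. -/
def IsNilpotentSub (A : LeibnizAlg F L) (U : Submodule F L) : Prop :=
  ∃ n : ℕ, A.lcs U n = ⊥

/-- `U` is abelian: `[U, U] = 0`. -/
def IsAbelian (A : LeibnizAlg F L) (U : Submodule F L) : Prop :=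
  A.prod U U = ⊥

/-- An `A`-algebra: every nilpotent subalgebra is abelian. -/
def IsAAlgebra (A : LeibnizAlg F L) : Prop :=
  ∀ U : Submodule F L, A.IsSubalgebra U → A.IsNilpotentSub U → A.IsAbelian U

/-- Derived series: `derSeries 0 = L`, `derSeries (k+1) = [derSeries k, derSeries k]`. -/
def derSeries (A : LeibnizAlg F L) : ℕ → Submodule F L
  | 0 => ⊤
  | k + 1 => A.prod (derSeries A k) (derSeries A k)

/-- `L` is solvable: some term of the derived series vanishes. -/
def IsSolvable (A : LeibnizAlg F L) : Prop :=
  ∃ n : ℕ, A.derSeries n = ⊥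

/-- The centralizer `Z_L(U)` of a subspace `U`. -/
def centralizer (A : LeibnizAlg F L) (U : Submodule F L) : Submodule F L where
  carrier := {x : L | ∀ u ∈ U, A.bracket x u = 0 ∧ A.bracket u x = 0}
  add_mem' := by
    intro a b ha hb u hu
    refine ⟨?_, ?_⟩
    · rw [map_add, LinearMap.add_apply, (ha u hu).1, (hb u hu).1, add_zero]
    · rw [map_add, (ha u hu).2, (hb u hu).2, add_zero]
  zero_mem' := by
    intro u hu
    refine ⟨?_, ?_⟩
    · rw [map_zero, LinearMap.zero_apply]
    · rw [map_zero]
  smul_mem' := by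
    intro c a ha u hu
    refine ⟨?_, ?_⟩
    · rw [map_smul, LinearMap.smul_apply, (ha u hu).1, smul_zero]
    · rw [map_smul, (ha u hu).2, smul_zero]

/-- The centre of the subalgebra `M`: elements of `M` centralizing `M`. -/
def centerOf (A : LeibnizAlg F L) (M : Submodule F L) : Submodule F L :=
  M ⊓ A.centralizer M

/-- `N` is the nilradical: the largest nilpotent ideal. -/
def IsNilradical (A : LeibnizAlg F L) (N : Submodule F L) : Prop :=
  A.IsIdeal N ∧ A.IsNilpotentSub N ∧
    ∀ I : Submodule F L, A.IsIdeal I → A.IsNilpotentSub I → I ≤ N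

/-- A minimal ideal: a nonzero ideal containing no ideal other than `0` and itself. -/
def IsMinimalIdeal (A : LeibnizAlg F L) (I : Submodule F L) : Prop :=
  A.IsIdeal I ∧ I ≠ ⊥ ∧ ∀ J : Submodule F L, A.IsIdeal J → J ≤ I → J = ⊥ ∨ J = I

/-- A maximal subalgebra. -/
def IsMaximalSubalgebra (A : LeibnizAlg F L) (M : Submodule F L) : Prop :=
  A.IsSubalgebra M ∧ M ≠ ⊤ ∧
    ∀ S : Submodule F L, A.IsSubalgebra S → M ≤ S → S = M ∨ S = ⊤

/-- `L` is φ-free: every ideal contained in all maximal subalgebras is zero. -/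
def IsPhiFree (A : LeibnizAlg F L) : Prop :=
  ∀ I : Submodule F L, A.IsIdeal I →
    (∀ M : Submodule F L, A.IsMaximalSubalgebra M → I ≤ M) → I = ⊥

/-- `Asoc L`: the sum of the abelian minimal ideals. -/
def asoc (A : LeibnizAlg F L) : Submodule F L :=
  sSup {I : Submodule F L | A.IsMinimalIdeal I ∧ A.IsAbelian I}

/-- A Cartan subalgebra: a nilpotent, self-normalizing subalgebra. -/
def IsCartan (A : LeibnizAlg F L) (C : Submodule F L) : Prop :=
  A.IsSubalgebra C ∧ A.IsNilpotentSub C ∧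
    ∀ x : L, (∀ c ∈ C, A.bracket x c ∈ C ∧ A.bracket c x ∈ C) → x ∈ C

/-- A maximal nilpotent subalgebra. -/
def IsMaxNilpotentSubalgebra (A : LeibnizAlg F L) (U : Submodule F L) : Prop :=
  A.IsSubalgebra U ∧ A.IsNilpotentSub U ∧
    ∀ V : Submodule F L, A.IsSubalgebra V → A.IsNilpotentSub V → U ≤ V → V = U

end LeibnizAlg

/-
Write `S² = [S, S]`. Induction along the derived series reduces the theorem to: if
`z ∈ L^(j+1)` satisfies `[z, L^(j)] = 0`, then `z ∈ L^(j+2)`. This is the case `S = L^(j)`,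
`M = L^(j+2)` of a more general statement: if `S` is a subalgebra, `M` a right ideal containing
`[S², S²]`, and `z ∈ S² + (M ∩ S)` satisfies `[z, S] = 0`, then `z ∈ M`.
If every right multiplication `R_c`, `c ∈ S`, is nilpotent on `S`, then `S` is nilpotent by
Engel's theorem, hence abelian, and `z ∈ M ∩ S`. Otherwise some `R_c` has a nonzero Fitting one
component `S₁` on `S`. Since `R_c` is a derivation, the null component `S₀` is a subalgebra and
`[S₀, S₁] + [S₁, S₀] ⊆ S₁`; moreover `S₁ ⊆ S²`, `[S₁, S₁] ⊆ M` and `R_c z = 0`. Hence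
`z ∈ S₀² + (M ∩ S₀)`, and we recurse on the smaller subalgebra `S₀`.
-/

open Module

theorem Submodule.finrank_map_add_finrank_inf_ker {K V W : Type*} [DivisionRing K]
    [AddCommGroup V] [Module K V] [AddCommGroup W] [Module K W] (g : V →ₗ[K] W)
    (X : Submodule K V) [FiniteDimensional K X] :
    finrank K (X.map g) + finrank K ↥(X ⊓ LinearMap.ker g) = finrank K X := by
  rw [← (g.domRestrict X).finrank_range_add_finrank_ker, LinearMap.range_domRestrict,
    LinearMap.ker_domRestrict, ← Submodule.map_comap_subtype, Submodule.finrank_map_subtype_eq]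

namespace Module.End

variable {K V : Type*} [DivisionRing K] [AddCommGroup V] [Module K V]

theorem map_pow_le_self {f : Module.End K V} {X : Submodule K V} (hX : ∀ x ∈ X, f x ∈ X)
    (m : ℕ) : X.map (f ^ m) ≤ X := by
  induction m with
  | zero => rw [pow_zero, one_eq_id, Submodule.map_id]
  | succ m ih =>
    rw [pow_succ', mul_eq_comp, Submodule.map_comp]
    exact (Submodule.map_mono ih).trans (Submodule.map_le_iff_le_comap.2 hX)

variable (f : Module.End K V) (X : Submodule K V)

/-- The exponent `finrank K V + 1` is positive, and large enough for the kernels and images of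
the powers of `f` to have stabilised. -/
noncomputable def fittingZero : Submodule K V :=
  X ⊓ LinearMap.ker (f ^ (finrank K V + 1))

noncomputable def fittingOne : Submodule K V :=
  X.map (f ^ (finrank K V + 1))

variable {f X}

theorem fittingOne_le (hX : ∀ x ∈ X, f x ∈ X) : f.fittingOne X ≤ X :=
  map_pow_le_self hX _

theorem fittingOne_le_map (hX : ∀ x ∈ X, f x ∈ X) : f.fittingOne X ≤ X.map f := by
  rw [fittingOne, pow_succ', mul_eq_comp, Submodule.map_comp]
  exact Submodule.map_mono (map_pow_le_self hX _)

variable [FiniteDimensional K V]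

theorem mem_fittingZero_iff {x : V} :
    x ∈ f.fittingZero X ↔ x ∈ X ∧ ∃ m, (f ^ m) x = 0 := by
  refine and_congr_right fun _ ↦ ⟨fun hx ↦ ⟨_, hx⟩, fun ⟨m, hm⟩ ↦ ?_⟩
  rw [pow_succ', mul_eq_comp]
  exact LinearMap.ker_le_ker_comp _ _ (f.ker_pow_le_ker_pow_finrank m hm)

theorem disjoint_fittingZero_fittingOne : Disjoint (f.fittingZero X) (f.fittingOne X) := by
  rw [Submodule.disjoint_def]
  rintro _ hy ⟨x, -, rfl⟩
  have hx : x ∈ f.fittingZero ⊤ := by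
    refine mem_fittingZero_iff.2 ⟨Submodule.mem_top, finrank K V + 1 + (finrank K V + 1), ?_⟩
    rw [pow_add, mul_apply]
    exact hy.2
  exact hx.2

theorem map_pow_eq_fittingOne (hX : ∀ x ∈ X, f x ∈ X) {m : ℕ} (hm : finrank K V + 1 ≤ m) :
    X.map (f ^ m) = f.fittingOne X := by
  obtain ⟨k, rfl⟩ := Nat.exists_eq_add_of_le hm
  have hle : X.map (f ^ (finrank K V + 1 + k)) ≤ f.fittingOne X := by
    rw [pow_add, mul_eq_comp, Submodule.map_comp]
    exact Submodule.map_mono (map_pow_le_self hX k)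
  -- equal dimensions by rank-nullity, as the kernels of the powers of `f` have stabilised
  refine Submodule.eq_of_le_of_finrank_eq hle ?_
  have h₁ := Submodule.finrank_map_add_finrank_inf_ker (W := V) (f ^ (finrank K V + 1 + k)) X
  have h₂ := Submodule.finrank_map_add_finrank_inf_ker (W := V) (f ^ (finrank K V + 1)) X
  rw [ker_pow_eq_ker_pow_finrank_of_le (by omega)] at h₁ h₂
  rw [fittingOne]
  omega

theorem map_fittingOne (hX : ∀ x ∈ X, f x ∈ X) : (f.fittingOne X).map f = f.fittingOne X := by
  rw [fittingOne, ← Submodule.map_comp, ← mul_eq_comp, ← pow_succ']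
  exact map_pow_eq_fittingOne hX (Nat.le_succ _)

theorem le_fittingZero_sup_fittingOne (hX : ∀ x ∈ X, f x ∈ X) :
    X ≤ f.fittingZero X ⊔ f.fittingOne X := by
  intro x hx
  set n := finrank K V + 1
  obtain ⟨y, hy, hyx⟩ : (f ^ n) x ∈ X.map (f ^ (n + n)) := by
    rw [map_pow_eq_fittingOne hX (Nat.le_add_right _ _)]
    exact Submodule.mem_map_of_mem hx
  have hy' : (f ^ n) y ∈ f.fittingOne X := ⟨y, hy, rfl⟩
  refine Submodule.mem_sup.2 ⟨x - (f ^ n) y, ⟨X.sub_mem hx (fittingOne_le hX hy'), ?_⟩,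
    (f ^ n) y, hy', sub_add_cancel _ _⟩
  rw [SetLike.mem_coe, LinearMap.mem_ker, map_sub, ← mul_apply, ← pow_add, hyx,
    sub_self]

end Module.End

namespace LeibnizAlg

variable {F L : Type*} [Field F] [AddCommGroup L] [Module F L]

section Product

variable (A : LeibnizAlg F L)

theorem bracket_mem_prod {M N : Submodule F L} {m n : L} (hm : m ∈ M) (hn : n ∈ N) :
    A.bracket m n ∈ A.prod M N :=
  Submodule.subset_span ⟨m, hm, n, hn, rfl⟩

theorem prod_le {M N P : Submodule F L} (h : ∀ m ∈ M, ∀ n ∈ N, A.bracket m n ∈ P) :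
    A.prod M N ≤ P := by
  rw [prod, Submodule.span_le]
  rintro _ ⟨m, hm, n, hn, rfl⟩
  exact h m hm n hn

theorem prod_mono {M N M' N' : Submodule F L} (hM : M ≤ M') (hN : N ≤ N') :
    A.prod M N ≤ A.prod M' N' :=
  A.prod_le fun _ hm _ hn ↦ A.bracket_mem_prod (hM hm) (hN hn)

def rmul (c : L) : Module.End F L :=
  A.bracket.flip c

theorem rmul_apply (c x : L) : A.rmul c x = A.bracket x c :=
  rfl

theorem rmul_bracket (c u v : L) :
    A.rmul c (A.bracket u v) = A.bracket u (A.rmul c v) + A.bracket (A.rmul c u) v := by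
  rw [rmul_apply, rmul_apply, rmul_apply, A.leibniz u v c, sub_add_cancel]

theorem pow_rmul_bracket_eq_zero {c u v : L} {a b : ℕ} (hu : (A.rmul c ^ a) u = 0)
    (hv : (A.rmul c ^ b) v = 0) : (A.rmul c ^ (a + b)) (A.bracket u v) = 0 := by
  obtain ⟨n, hn⟩ : ∃ n, a + b = n := ⟨_, rfl⟩
  rw [hn]
  induction n generalizing a b u v with
  | zero =>
    obtain ⟨rfl, -⟩ : a = 0 ∧ b = 0 := by omega
    rw [pow_zero, Module.End.one_apply] at hu
    simp [hu]
  | succ n ih =>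
    rcases a with _ | a
    · rw [pow_zero, Module.End.one_apply] at hu
      simp [hu]
    rcases b with _ | b
    · rw [pow_zero, Module.End.one_apply] at hv
      simp [hv]
    rw [pow_succ, Module.End.mul_apply] at hu hv ⊢
    rw [A.rmul_bracket, map_add,
      ih (a := a + 1) (b := b) (by rwa [pow_succ, Module.End.mul_apply]) hv (by omega),
      ih (a := a) (b := b + 1) hu (by rwa [pow_succ, Module.End.mul_apply]) (by omega), add_zero]

end Product

variable {A : LeibnizAlg F L}

section Fitting

variable {S : Submodule F L} {c : L}

theorem rmul_mem (hS : A.IsSubalgebra S) (hc : c ∈ S) {x : L} (hx : x ∈ S) : A.rmul c x ∈ S :=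
  hS (A.bracket_mem_prod hx hc)

theorem fittingOne_le_prod (hS : A.IsSubalgebra S) (hc : c ∈ S) :
    (A.rmul c).fittingOne S ≤ A.prod S S :=
  (Module.End.fittingOne_le_map fun _ ↦ rmul_mem hS hc).trans
    (Submodule.map_le_iff_le_comap.2 fun _ hx ↦ A.bracket_mem_prod hx hc)

variable [FiniteDimensional F L]

theorem isSubalgebra_fittingZero (hS : A.IsSubalgebra S) :
    A.IsSubalgebra ((A.rmul c).fittingZero S) := by
  refine A.prod_le fun u hu v hv ↦ ?_
  obtain ⟨huS, a, hua⟩ := Module.End.mem_fittingZero_iff.1 hu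
  obtain ⟨hvS, b, hvb⟩ := Module.End.mem_fittingZero_iff.1 hv
  exact Module.End.mem_fittingZero_iff.2
    ⟨hS (A.bracket_mem_prod huS hvS), a + b, A.pow_rmul_bracket_eq_zero hua hvb⟩

theorem bracket_mem_fittingOne_of_rmul (hS : A.IsSubalgebra S) (hc : c ∈ S) {u : L} (hu : u ∈ S)
    (hcu : ∀ w ∈ (A.rmul c).fittingOne S,
      A.bracket (A.rmul c u) w ∈ (A.rmul c).fittingOne S ∧
        A.bracket w (A.rmul c u) ∈ (A.rmul c).fittingOne S)
    {v : L} (hv : v ∈ (A.rmul c).fittingOne S) :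
    A.bracket u v ∈ (A.rmul c).fittingOne S ∧ A.bracket v u ∈ (A.rmul c).fittingOne S := by
  set f := A.rmul c
  set S₁ := f.fittingOne S
  have hfS : ∀ x ∈ S, f x ∈ S := fun _ ↦ rmul_mem hS hc
  have hS₁ : S₁.map f = S₁ := Module.End.map_fittingOne hfS
  suffices key : ∀ m, ∀ v ∈ S₁, A.bracket u v ∈ S.map (f ^ m) ⊔ S₁ ∧
      A.bracket v u ∈ S.map (f ^ m) ⊔ S₁ by
    simpa only [S₁, Module.End.fittingOne, sup_idem] using key (finrank F L + 1) v hv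
  intro m
  induction m with
  | zero =>
    intro v hv
    have hvS := Module.End.fittingOne_le hfS hv
    rw [pow_zero, Module.End.one_eq_id, Submodule.map_id]
    exact ⟨Submodule.mem_sup_left (hS (A.bracket_mem_prod hu hvS)),
      Submodule.mem_sup_left (hS (A.bracket_mem_prod hvS hu))⟩
  | succ m ih =>
    intro v hv
    rw [← hS₁] at hv
    obtain ⟨w, hw, rfl⟩ := hv
    have hmap : (S.map (f ^ m) ⊔ S₁).map f = S.map (f ^ (m + 1)) ⊔ S₁ := by
      rw [Submodule.map_sup, hS₁, ← Submodule.map_comp, ← Module.End.mul_eq_comp,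
        ← pow_succ']
    -- `f` is a derivation: `[u, f w] = f [u, w] - [f u, w]` and `[f w, u] = f [w, u] - [w, f u]`
    constructor
    · rw [eq_sub_of_add_eq (A.rmul_bracket c u w).symm]
      exact sub_mem (hmap ▸ Submodule.mem_map_of_mem (ih w hw).1)
        (Submodule.mem_sup_right (hcu w hw).1)
    · rw [eq_sub_of_add_eq' (A.rmul_bracket c w u).symm]
      exact sub_mem (hmap ▸ Submodule.mem_map_of_mem (ih w hw).2)
        (Submodule.mem_sup_right (hcu w hw).2)

theorem bracket_mem_fittingOne (hS : A.IsSubalgebra S) (hc : c ∈ S) {u v : L}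
    (hu : u ∈ (A.rmul c).fittingZero S) (hv : v ∈ (A.rmul c).fittingOne S) :
    A.bracket u v ∈ (A.rmul c).fittingOne S ∧ A.bracket v u ∈ (A.rmul c).fittingOne S := by
  obtain ⟨huS, a, hua⟩ := Module.End.mem_fittingZero_iff.1 hu
  induction a generalizing u v with
  | zero =>
    rw [pow_zero, Module.End.one_apply] at hua
    simp [hua]
  | succ a ih =>
    refine bracket_mem_fittingOne_of_rmul hS hc huS (fun w hw ↦ ?_) hv
    have hfu : A.rmul c u ∈ S := rmul_mem hS hc huS
    have hfua : (A.rmul c ^ a) (A.rmul c u) = 0 := by rwa [← Module.End.mul_apply, ← pow_succ]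
    exact ih (Module.End.mem_fittingZero_iff.2 ⟨hfu, a, hfua⟩) hw hfu hfua

theorem mem_prod_fittingZero_sup {M : Submodule F L} (hS : A.IsSubalgebra S) (hc : c ∈ S)
    (hM : A.prod M ⊤ ≤ M) (hSM : A.prod (A.prod S S) (A.prod S S) ≤ M) {z : L}
    (hzc : A.bracket z c = 0) (hz : z ∈ A.prod S S ⊔ (M ⊓ S)) :
    z ∈ A.prod ((A.rmul c).fittingZero S) ((A.rmul c).fittingZero S) ⊔
      (M ⊓ (A.rmul c).fittingZero S) := by
  set f := A.rmul c
  set S₀ := f.fittingZero S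
  set S₁ := f.fittingOne S
  set P := A.prod S₀ S₀ ⊔ (M ⊓ S₀)
  have hfS : ∀ x ∈ S, f x ∈ S := fun _ ↦ rmul_mem hS hc
  have hfMS : ∀ x ∈ M ⊓ S, f x ∈ M ⊓ S := fun x hx ↦
    ⟨hM (A.bracket_mem_prod hx.1 Submodule.mem_top), hfS x hx.2⟩
  have hMS : M ⊓ S ≤ P ⊔ S₁ := by
    refine (Module.End.le_fittingZero_sup_fittingOne hfMS).trans (sup_le_sup ?_ ?_)
    · rw [Module.End.fittingZero, inf_assoc]
      exact le_sup_right
    · exact Submodule.map_mono inf_le_right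
  have hSS : A.prod S S ≤ P ⊔ S₁ := by
    refine A.prod_le fun u hu v hv ↦ ?_
    obtain ⟨u₀, hu₀, u₁, hu₁, rfl⟩ :=
      Submodule.mem_sup.1 (Module.End.le_fittingZero_sup_fittingOne hfS hu)
    obtain ⟨v₀, hv₀, v₁, hv₁, rfl⟩ :=
      Submodule.mem_sup.1 (Module.End.le_fittingZero_sup_fittingOne hfS hv)
    have h₁₁ : A.bracket u₁ v₁ ∈ M ⊓ S :=
      ⟨hSM (A.bracket_mem_prod (fittingOne_le_prod hS hc hu₁) (fittingOne_le_prod hS hc hv₁)),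
        hS (A.bracket_mem_prod (Module.End.fittingOne_le hfS hu₁)
          (Module.End.fittingOne_le hfS hv₁))⟩
    simp only [map_add, LinearMap.add_apply]
    refine add_mem (add_mem ?_ ?_) (add_mem ?_ (hMS h₁₁))
    · exact Submodule.mem_sup_left (Submodule.mem_sup_left (A.bracket_mem_prod hu₀ hv₀))
    · exact Submodule.mem_sup_right (bracket_mem_fittingOne hS hc hv₀ hu₁).2
    · exact Submodule.mem_sup_right (bracket_mem_fittingOne hS hc hu₀ hv₁).1
  have hzS₀ : z ∈ S₀ := by
    refine Module.End.mem_fittingZero_iff.2 ⟨(sup_le hS inf_le_right) hz, 1, ?_⟩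
    rwa [pow_one, rmul_apply]
  have hPS₀ : P ≤ S₀ := sup_le (isSubalgebra_fittingZero hS) inf_le_right
  have hz' : z ∈ (P ⊔ S₁) ⊓ S₀ := ⟨sup_le hSS hMS hz, hzS₀⟩
  rwa [sup_inf_assoc_of_le _ hPS₀, inf_comm,
    Module.End.disjoint_fittingZero_fittingOne.eq_bot, sup_bot_eq] at hz'

end Fitting

section Engel

attribute [local instance] LieRing.ofAssociativeRing

variable {S : Submodule F L}

variable (A) in
def rightMulOn (hS : A.IsSubalgebra S) : S →ₗ[F] Module.End F S :=
  LinearMap.mk₂ F (fun c x ↦ ⟨A.bracket x c, hS (A.bracket_mem_prod x.2 c.2)⟩)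
    (fun _ _ _ ↦ Subtype.ext (by simp)) (fun _ _ _ ↦ Subtype.ext (by simp))
    (fun _ _ _ ↦ Subtype.ext (by simp)) (fun _ _ _ ↦ Subtype.ext (by simp))

theorem lie_rightMulOn (hS : A.IsSubalgebra S) (c d : S) :
    ⁅A.rightMulOn hS c, A.rightMulOn hS d⁆ =
      A.rightMulOn hS ⟨A.bracket d c, hS (A.bracket_mem_prod d.2 c.2)⟩ := by
  ext x
  rw [Ring.lie_def]
  exact (A.leibniz x d c).symm

variable (A) in
def rightMulAlgebra (hS : A.IsSubalgebra S) : LieSubalgebra F (Module.End F S) where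
  toSubmodule := LinearMap.range (A.rightMulOn hS)
  lie_mem' := by
    rintro _ _ ⟨c, rfl⟩ ⟨d, rfl⟩
    exact ⟨_, (lie_rightMulOn hS c d).symm⟩

theorem lcs_succ_le_map_lowerCentralSeries (hS : A.IsSubalgebra S) (m : ℕ) :
    A.lcs S (m + 1) ≤
      (LieModule.lowerCentralSeries F (A.rightMulAlgebra hS) S m).toSubmodule.map S.subtype := by
  induction m with
  | zero =>
    rw [LieModule.lowerCentralSeries_zero, LieSubmodule.top_toSubmodule, Submodule.map_subtype_top]
    exact hS
  | succ m ih =>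
    refine A.prod_le fun w hw c hc ↦ ?_
    obtain ⟨w', hw', rfl⟩ := ih hw
    let X : A.rightMulAlgebra hS := ⟨A.rightMulOn hS ⟨c, hc⟩, ⟨c, hc⟩, rfl⟩
    refine ⟨⁅X, w'⁆, ?_, rfl⟩
    rw [SetLike.mem_coe, LieSubmodule.mem_toSubmodule, LieModule.lowerCentralSeries_succ]
    exact LieSubmodule.lie_mem_lie (LieSubmodule.mem_top X) hw'

theorem isNilpotentSub_of_forall_pow_rmul [FiniteDimensional F L] (hS : A.IsSubalgebra S)
    (h : ∀ c ∈ S, ∃ k, ∀ x ∈ S, (A.rmul c ^ k) x = 0) : A.IsNilpotentSub S := by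
  have hnil : ∀ X : A.rightMulAlgebra hS, IsNilpotent (LieModule.toEnd F _ S X) := by
    rintro ⟨_, c, rfl⟩
    obtain ⟨k, hk⟩ := h c c.2
    have hc : LieModule.toEnd F (A.rightMulAlgebra hS) S ⟨A.rightMulOn hS c, c, rfl⟩ =
        (A.rmul c).restrict fun _ ↦ rmul_mem hS c.2 := rfl
    refine ⟨k, ?_⟩
    rw [hc, Module.End.pow_restrict]
    ext x
    simp [hk x x.2]
  obtain ⟨k, hk⟩ := (LieModule.isNilpotent_iff F _ S).1
    (LieAlgebra.isEngelian_of_isNoetherian S hnil)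
  refine ⟨k + 1, eq_bot_iff.2 ((lcs_succ_le_map_lowerCentralSeries hS k).trans ?_)⟩
  rw [hk, LieSubmodule.bot_toSubmodule, Submodule.map_bot]

end Engel

theorem mem_of_mem_prod_sup [FiniteDimensional F L] (hA : A.IsAAlgebra) {S M : Submodule F L}
    (hS : A.IsSubalgebra S) (hM : A.prod M ⊤ ≤ M) (hSM : A.prod (A.prod S S) (A.prod S S) ≤ M)
    {z : L} (hzS : ∀ u ∈ S, A.bracket z u = 0) (hz : z ∈ A.prod S S ⊔ (M ⊓ S)) : z ∈ M := by
  induction S using WellFoundedLT.induction with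
  | _ S ih =>
    by_cases hnil : ∀ c ∈ S, (A.rmul c).fittingOne S = ⊥
    · have hnilS : A.IsNilpotentSub S := isNilpotentSub_of_forall_pow_rmul hS fun c hc ↦
        ⟨_, fun x hx ↦ (Submodule.mem_bot F).1 ((hnil c hc).le ⟨x, hx, rfl⟩)⟩
      rw [hA S hS hnilS, bot_sup_eq] at hz
      exact hz.1
    push Not at hnil
    obtain ⟨c, hc, hS₁⟩ := hnil
    have hlt : (A.rmul c).fittingZero S < S := by
      refine lt_of_le_of_ne inf_le_left fun h ↦ hS₁ ?_
      have := Module.End.disjoint_fittingZero_fittingOne (f := A.rmul c) (X := S)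
      rw [h] at this
      exact this.eq_bot_of_ge (Module.End.fittingOne_le fun _ ↦ rmul_mem hS hc)
    have hS₀ : (A.rmul c).fittingZero S ≤ S := inf_le_left
    exact ih _ hlt (isSubalgebra_fittingZero hS) ((A.prod_mono (A.prod_mono hS₀ hS₀)
      (A.prod_mono hS₀ hS₀)).trans hSM) (fun u hu ↦ hzS u (hS₀ hu))
      (mem_prod_fittingZero_sup hS hc hM hSM (hzS c hc) hz)

theorem derSeries_succ_le (j : ℕ) : A.derSeries (j + 1) ≤ A.derSeries j := by
  induction j with
  | zero => exact le_top
  | succ j ih => exact A.prod_mono ih ih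

theorem isSubalgebra_derSeries (j : ℕ) : A.IsSubalgebra (A.derSeries j) :=
  derSeries_succ_le j

theorem prod_derSeries_top_le (j : ℕ) : A.prod (A.derSeries j) ⊤ ≤ A.derSeries j := by
  induction j with
  | zero => exact le_top
  | succ j ih =>
    refine A.prod_le fun w hw x _ ↦ ?_
    have hx : A.derSeries (j + 1) ≤ (A.derSeries (j + 1)).comap (A.rmul x) :=
      A.prod_le fun a ha b hb ↦ by
        rw [Submodule.mem_comap, A.rmul_bracket]
        exact add_mem (A.bracket_mem_prod ha (ih (A.bracket_mem_prod hb Submodule.mem_top)))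
          (A.bracket_mem_prod (ih (A.bracket_mem_prod ha Submodule.mem_top)) hb)
    exact hx hw

theorem eq_zero_of_mem_derSeries_succ [FiniteDimensional F L] (hA : A.IsAAlgebra) {i j : ℕ}
    (hij : A.derSeries (j + i) = ⊥) {z : L} (hz : ∀ u ∈ A.derSeries j, A.bracket z u = 0)
    (hzj : z ∈ A.derSeries (j + 1)) : z = 0 := by
  induction i generalizing j with
  | zero => exact (Submodule.mem_bot F).1 (hij ▸ derSeries_succ_le j hzj)
  | succ i ih =>
    have hzj' : z ∈ A.derSeries (j + 2) := mem_of_mem_prod_sup hA (isSubalgebra_derSeries j)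
      (prod_derSeries_top_le (j + 2)) le_rfl hz (Submodule.mem_sup_left hzj)
    refine ih ?_ (fun u hu ↦ hz u (derSeries_succ_le j hu)) hzj'
    rwa [add_right_comm, add_assoc]

end LeibnizAlg

/-- For a solvable Leibniz A-algebra `L`, `Z(L) ∩ L² = 0`. -/
theorem center_inf_derived_eq_bot
    {F L : Type*} [Field F] [AddCommGroup L] [Module F L] [FiniteDimensional F L]
    (A : LeibnizAlg F L) (hA : A.IsAAlgebra) (hsolv : A.IsSolvable) :
    A.centerOf ⊤ ⊓ A.derSeries 1 = ⊥ := by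
  obtain ⟨n, hn⟩ := hsolv
  refine eq_bot_iff.2 fun z ⟨hzc, hzd⟩ ↦ (Submodule.mem_bot F).2 ?_
  exact LeibnizAlg.eq_zero_of_mem_derSeries_succ hA (i := n) (j := 0) (by rwa [zero_add])
    (fun u _ ↦ (hzc.2 u Submodule.mem_top).1) hzd
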